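/- Let k be an integer with k ≥ 0, and let a_0, a_1, …, a_{α_t} be the unique rational numbers such that N(I,n) = Σ_{i=0}^{α_t} a_i · C(n+k, i) for every positive integer n, where for an integer a and nonnegative integer i, C(a,i) = a(a−1)⋯(a−i+1)/i! denotes the generalized binomial coefficient. Then there exists an i with 0 ≤ i ≤ α_t such that a_i < 0. -/

import Mathlib

open Finset

/-- Sequences of length `ℓ` (positions `1..ℓ`) with entries in `{1,…,n}`,
encoded as functions `ℕ → ℕ` vanishing outside `[1, ℓ]`. -/
def Seqs (ℓ n : ℕ) : Set (ℕ → ℕ) :=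
  {v | (∀ i ∈ Finset.Icc 1 ℓ, v i ∈ Finset.Icc 1 n) ∧ ∀ i, i ∉ Finset.Icc 1 ℓ → v i = 0}

/-- Descent set of a sequence of length `ℓ`:
`Des(v) = {i ∈ {1,…,ℓ-1} : v_i > v_{i+1}}`. -/
def Des (ℓ : ℕ) (v : ℕ → ℕ) : Set ℕ :=
  {i | 1 ≤ i ∧ i < ℓ ∧ v (i + 1) < v i}

/-- Number of occurrences of the value `j` among positions `1..ℓ` of `v`. -/
def mult (ℓ : ℕ) (v : ℕ → ℕ) (j : ℕ) : ℕ :=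
  ((Finset.Icc 1 ℓ).filter fun i => v i = j).card

/-- `𝔡^m(I, n)`: the number of sequences of length `n*m`, in which each of `1,…,n`
appears exactly `m` times, whose descent set is `I`. -/
noncomputable def dP (m : ℕ) (I : Finset ℕ) (n : ℕ) : ℕ :=
  Set.ncard {w ∈ Seqs (n * m) n |
    Des (n * m) w = ↑I ∧ ∀ j ∈ Finset.Icc 1 n, mult (n * m) w j = m}

/-- `N(I, n)`: the number of sequences `v = (v_1, …, v_{α_t})` with entries in `{1,…,n}`
such that `Des v = I \ {α_t}` and `v_{α_t} ≠ 1`. -/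
noncomputable def Ncount (I : Finset ℕ) (n : ℕ) : ℕ :=
  Set.ncard {v ∈ Seqs (I.sup id) n |
    Des (I.sup id) v = ↑(I.erase (I.sup id)) ∧ v (I.sup id) ≠ 1}

/-- `D^m(I, n)`: the number of sequences `v = (v_1, …, v_{α_t})` with entries in `{1,…,n}`
such that `Des v = I \ {α_t}` and each of `1,…,n` appears at most `m` times in `v`. -/
noncomputable def Dcount (m : ℕ) (I : Finset ℕ) (n : ℕ) : ℕ :=
  Set.ncard {v ∈ Seqs (I.sup id) n |
    Des (I.sup id) v = ↑(I.erase (I.sup id)) ∧ ∀ j ∈ Finset.Icc 1 n, mult (I.sup id) v j ≤ m}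

/-- `b_i(I)`: the number of sequences `v = (v_1, …, v_{α_t})` with entries in `{1,…,i+1}`
such that `Des v = I \ {α_t}`, every number in `{2,…,i+1}` occurs in `v`, and `v_{α_t} ≠ 1`. -/
noncomputable def bcoef (I : Finset ℕ) (i : ℕ) : ℕ :=
  Set.ncard {v ∈ Seqs (I.sup id) (i + 1) |
    Des (I.sup id) v = ↑(I.erase (I.sup id)) ∧
    (∀ l ∈ Finset.Icc 2 (i + 1), ∃ j ∈ Finset.Icc 1 (I.sup id), v j = l) ∧
    v (I.sup id) ≠ 1}

/-- `L(I)`: the length of the longest run of consecutive integers contained in `I`. -/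
def longestRun (I : Finset ℕ) : ℕ :=
  I.sup fun a => ((Finset.Icc a (I.sup id)).filter fun b => Finset.Icc a b ⊆ I).card

/-- `alphaVal I k` is the `k`-th smallest element of `I` (`1`-indexed), with `alphaVal I 0 = 0`. -/
def alphaVal (I : Finset ℕ) (k : ℕ) : ℕ :=
  if k = 0 then 0 else (I.sort (· ≤ ·)).getD (k - 1) 0

/-- For a composition `A = (a_1,…,a_s)` of `t = |I|`, `sigmaC I A i` is
`σ_{i+1} = β_{a_1+⋯+a_i+1} + ⋯ + β_{a_1+⋯+a_{i+1}}`, where `β` is the sequence of first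
differences of `(0, α_1, …, α_t)`; by telescoping this equals
`α_{a_1+⋯+a_{i+1}} - α_{a_1+⋯+a_i}`. -/
def sigmaC (I : Finset ℕ) {t : ℕ} (A : Composition t) (i : ℕ) : ℕ :=
  alphaVal I (A.sizeUpTo (i + 1)) - alphaVal I (A.sizeUpTo i)

/-- `C(A, I)` for a composition `A = (a_1,…,a_r)`: the number of sequences
`v = (v_1, …, v_{α_t})` with entries in `{1,…,r}` such that `Des v = I \ {α_t}`
and the number `j` appears exactly `a_j` times in `v`, for each `j ∈ {1,…,r}`. -/
noncomputable def Ccount (I : Finset ℕ) {N : ℕ} (A : Composition N) : ℕ :=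
  Set.ncard {v ∈ Seqs (I.sup id) A.length |
    Des (I.sup id) v = ↑(I.erase (I.sup id)) ∧
    ∀ j ∈ Finset.Icc 1 A.length, mult (I.sup id) v j = A.blocks.getD (j - 1) 0}

/-- The generalized binomial coefficient `C(a, i) = a(a-1)⋯(a-i+1)/i!` for an integer `a`. -/
def genChoose (a : ℤ) (i : ℕ) : ℚ :=
  (∏ j ∈ Finset.range i, ((a : ℚ) - (j : ℚ))) / (Nat.factorial i)

/-!
Suppose all `a_i ≥ 0` and put `P(x) = ∑ a_i C(x + k, i)`, a polynomial of degree at most `α_t`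
with `P(n) = N(I,n)` for `n ≥ 1`. As `C(k, i) ≤ C(k + 1, i)`, we get `0 ≤ P(0) ≤ P(1) = N(I,1) = 0`,
so `P(n) = N(I,n)` for every `n ≥ 0`. Hence the `L`-th forward difference of `n ↦ N(I,n)` vanishes
at `0` for `L = α_t + 1`, and reducing it mod 2 shows that `∑_{n=1}^{L} C(L,n) N(I,n)` is even.

But that sum is odd whenever `max I < L`. Let `M(n)` count the sequences of length `α_t` with
entries in `[1,n]` and descent set `J = I ∖ {α_t}`. Such a sequence ending in `1` is constant `1`
after position `max J`, and cutting it there gives `M(n) = N(I,n) + N(J,n)`. Relabelling values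
along the increasing bijection `[1,|T|] → T` gives `∑_n C(L,n) M(n) = ∑_{T ⊆ [1,L]} M(|T|)`, which
counts pairs `(T, w)` with `image w ⊆ T`; it equals `∑_w 2^(L - |image w|)`, which is even since
`|image w| ≤ α_t < L`. Induction on `I`, starting from `∑_{n=1}^{L} C(L,n) = 2^L - 1`, concludes.
-/

open scoped fwdDiff

lemma genChoose_natCast (N i : ℕ) : genChoose N i = N.choose i := by
  rw [genChoose, Int.cast_natCast, ← descPochhammer_eval_eq_prod_range,
    descPochhammer_eval_eq_descFactorial, Nat.descFactorial_eq_factorial_mul_choose]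
  push_cast
  field_simp

lemma fwdDiff_iter_choose_eq_zero {R : Type*} [Ring R] {i n : ℕ} (h : i < n) :
    Δ_[1] ^[n] (fun x : ℕ ↦ (x.choose i : R)) = 0 := by
  induction n generalizing i with
  | zero => omega
  | succ n ih =>
    rw [Function.iterate_succ_apply]
    cases i with
    | zero =>
      simp only [Nat.choose_zero_right, Nat.cast_one, fwdDiff_const]
      exact Function.iterate_fixed (fwdDiff_const 1 (0 : R)) n
    | succ i =>
      have hdiff : Δ_[1] (fun x : ℕ ↦ (x.choose (i + 1) : R)) = fun x ↦ (x.choose i : R) := by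
        ext x
        simp [fwdDiff, Nat.choose_succ_succ' x i]
      rw [hdiff]
      exact ih (by omega)

lemma fwdDiff_iter_sum_mul_choose_eq_zero {R : Type*} [CommRing R] (a : ℕ → R) (K n : ℕ) :
    Δ_[1] ^[n] (fun x : ℕ ↦ ∑ i ∈ range n, a i * ((x + K).choose i : R)) = 0 := by
  have hsum : (fun x : ℕ ↦ ∑ i ∈ range n, a i * ((x + K).choose i : R)) =
      ∑ i ∈ range n, a i • fun x ↦ ((x + K).choose i : R) := by
    ext x
    simp [Finset.sum_apply]
  rw [hsum, fwdDiff_iter_finsetSum]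
  refine sum_eq_zero fun i hi ↦ ?_
  ext x
  rw [fwdDiff_iter_const_smul, Pi.smul_apply,
    fwdDiff_iter_comp_add _ (fun x : ℕ ↦ (x.choose i : R)),
    fwdDiff_iter_choose_eq_zero (mem_range.mp hi)]
  simp

lemma even_sum_choose_mul_of_fwdDiff_iter_eq_zero {f : ℕ → ℕ} {L : ℕ}
    (h : Δ_[1] ^[L] (fun n : ℕ ↦ (f n : ℚ)) 0 = 0) :
    Even (∑ n ∈ range (L + 1), L.choose n * f n) := by
  rw [fwdDiff_iter_eq_sum_shift] at h
  have hℤ : ∑ n ∈ range (L + 1), (-1 : ℤ) ^ (L - n) * L.choose n * f n = 0 := by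
    simp only [zsmul_eq_mul, zero_add, smul_eq_mul, mul_one] at h
    exact_mod_cast h
  have hmod := congrArg (Int.cast : ℤ → ZMod 2) hℤ
  have hneg : (-1 : ZMod 2) = 1 := rfl
  push_cast [hneg, one_pow, one_mul] at hmod
  exact ZMod.natCast_eq_zero_iff_even.mp (by exact_mod_cast hmod)

lemma sum_range_succ_eq_add_sum_Icc {M : Type*} [AddCommMonoid M] (f : ℕ → M) (L : ℕ) :
    ∑ n ∈ range (L + 1), f n = f 0 + ∑ n ∈ Icc 1 L, f n := by
  rw [Nat.range_succ_eq_Icc_zero, ← insert_Icc_add_one_left_eq_Icc (Nat.zero_le L),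
    sum_insert (by simp)]
  rfl

lemma sup_id_mem_of_pos {s : Finset ℕ} (h : 1 ≤ s.sup id) : s.sup id ∈ s := by
  have hs : s.Nonempty := nonempty_iff_ne_empty.mpr (by rintro rfl; simp at h)
  obtain ⟨x, hx, hxr⟩ := exists_mem_eq_sup s hs id
  rw [hxr]
  exact hx

lemma sup_id_insert_of_forall_lt {a : ℕ} {s : Finset ℕ} (hsa : ∀ x ∈ s, x < a) :
    (insert a s).sup id = a :=
  (sup_insert (f := id)).trans (sup_eq_left.mpr (Finset.sup_le fun x hx ↦ (hsa x hx).le))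

lemma seqs_finite (ℓ n : ℕ) : (Seqs ℓ n).Finite := by
  have hle : ∀ v ∈ Seqs ℓ n, ∀ i, v i ≤ n := by
    intro v hv i
    by_cases hi : i ∈ Icc 1 ℓ
    · exact (mem_Icc.mp (hv.1 i hi)).2
    · simp [hv.2 i hi]
  refine Set.Finite.of_finite_image (Set.toFinite _)
    (f := fun v (i : Fin (ℓ + 1)) ↦ (⟨min (v i) n, by omega⟩ : Fin (n + 1))) ?_
  intro v hv w hw hvw
  funext i
  by_cases hi : i ≤ ℓ
  · simpa [Fin.ext_iff, hle v hv i, hle w hw i] using congrFun hvw ⟨i, by omega⟩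
  · rw [hv.2 i (by simp; omega), hw.2 i (by simp; omega)]

lemma seqs_zero (n : ℕ) : Seqs 0 n = {0} := by
  ext v
  simp only [Seqs, Set.mem_ofPred_eq, Set.mem_singleton_iff, funext_iff, Pi.zero_apply]
  constructor
  · exact fun hv i ↦ hv.2 i (by simp)
  · exact fun hv ↦ ⟨by simp, fun i _ ↦ hv i⟩

lemma ncount_empty (n : ℕ) : Ncount ∅ n = 1 := by
  have hDes : Des 0 0 = ∅ := by
    ext i
    simp [Des]
  rw [Ncount]
  convert Set.ncard_singleton (0 : ℕ → ℕ) using 2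
  ext v
  simp only [sup_empty, Nat.bot_eq_zero, seqs_zero, Set.mem_singleton_iff]
  constructor
  · exact fun hv ↦ hv.1
  · rintro rfl
    simp [hDes]

lemma ncount_eq_zero_of_le_one {I : Finset ℕ} (hI : 1 ≤ I.sup id) {n : ℕ} (hn : n ≤ 1) :
    Ncount I n = 0 := by
  rw [Ncount]
  convert Set.ncard_empty (ℕ → ℕ) using 2
  refine Set.eq_empty_of_forall_notMem ?_
  rintro v ⟨hv, -, hv1⟩
  have := mem_Icc.mp (hv.1 (I.sup id) (mem_Icc.mpr ⟨hI, le_rfl⟩))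
  omega

def DesSeqs (ℓ : ℕ) (J : Set ℕ) (n : ℕ) : Set (ℕ → ℕ) :=
  {v ∈ Seqs ℓ n | Des ℓ v = J}

lemma desSeqs_finite (ℓ : ℕ) (J : Set ℕ) (n : ℕ) : (DesSeqs ℓ J n).Finite :=
  (seqs_finite ℓ n).subset fun _ hv ↦ hv.1

lemma des_comp_of_strictMonoOn {e : ℕ → ℕ} {s : Set ℕ} (he : StrictMonoOn e s) {v : ℕ → ℕ}
    (hv : ∀ i, v i ∈ s) (ℓ : ℕ) : Des ℓ (e ∘ v) = Des ℓ v := by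
  ext i
  simp only [Des, Set.mem_ofPred_eq, Function.comp_apply, he.lt_iff_lt (hv _) (hv _)]

lemma mem_Iic_of_mem_desSeqs {ℓ m : ℕ} {J : Set ℕ} {v : ℕ → ℕ} (hv : v ∈ DesSeqs ℓ J m)
    (i : ℕ) : v i ∈ Set.Iic m := by
  by_cases hi : i ∈ Icc 1 ℓ
  · exact (mem_Icc.mp (hv.1.1 i hi)).2
  · simp [hv.1.2 i hi]

section Relabel

variable {e : ℕ → ℕ} {m L ℓ : ℕ} {J : Set ℕ} {T : Finset ℕ}

lemma comp_mem_desSeqs (he : StrictMonoOn e (Set.Iic m)) (he0 : e 0 = 0)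
    (heT : e '' Set.Iic m = insert 0 ↑T) (hT : T ⊆ Icc 1 L) {v : ℕ → ℕ}
    (hv : v ∈ DesSeqs ℓ J m) : e ∘ v ∈ {w ∈ DesSeqs ℓ J L | ∀ i ∈ Icc 1 ℓ, w i ∈ T} := by
  have hvT : ∀ i ∈ Icc 1 ℓ, e (v i) ∈ T := by
    intro i hi
    have hvi := mem_Icc.mp (hv.1.1 i hi)
    have hmem : e (v i) ∈ insert 0 (T : Set ℕ) := heT ▸ ⟨v i, hvi.2, rfl⟩
    have hpos : e 0 < e (v i) := he (Set.mem_Iic.mpr (Nat.zero_le m)) hvi.2 hvi.1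
    rcases hmem with h | h
    · omega
    · exact h
  refine ⟨⟨⟨fun i hi ↦ hT (hvT i hi), fun i hi ↦ ?_⟩, ?_⟩, hvT⟩
  · simp [hv.1.2 i hi, he0]
  · rw [des_comp_of_strictMonoOn he (mem_Iic_of_mem_desSeqs hv), hv.2]

lemma exists_comp_eq_of_mem (he : StrictMonoOn e (Set.Iic m)) (he0 : e 0 = 0)
    (heT : e '' Set.Iic m = insert 0 ↑T) (hT : T ⊆ Icc 1 L) {w : ℕ → ℕ}
    (hw : w ∈ {w ∈ DesSeqs ℓ J L | ∀ i ∈ Icc 1 ℓ, w i ∈ T}) :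
    ∃ v ∈ DesSeqs ℓ J m, e ∘ v = w := by
  obtain ⟨⟨hwS, hwD⟩, hwT⟩ := hw
  have hpre : ∀ i, ∃ j ∈ Set.Iic m, e j = w i := by
    intro i
    rw [← Set.mem_image, heT]
    by_cases hi : i ∈ Icc 1 ℓ
    · exact Or.inr (hwT i hi)
    · exact Or.inl (hwS.2 i hi)
  set v : ℕ → ℕ := fun i ↦ Function.invFunOn e (Set.Iic m) (w i)
  have hv : ∀ i, v i ∈ Set.Iic m := fun i ↦ Function.invFunOn_mem (hpre i)
  have hev : e ∘ v = w := funext fun i ↦ Function.invFunOn_eq (hpre i)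
  refine ⟨v, ⟨⟨fun i hi ↦ ?_, fun i hi ↦ ?_⟩, ?_⟩, hev⟩
  · have hvi0 : v i ≠ 0 := by
      intro h
      have hwi := mem_Icc.mp (hT (hwT i hi))
      rw [← congrFun hev i, Function.comp_apply, h, he0] at hwi
      omega
    exact mem_Icc.mpr ⟨Nat.one_le_iff_ne_zero.mpr hvi0, hv i⟩
  · refine he.injOn (hv i) (Set.mem_Iic.mpr (Nat.zero_le m)) ?_
    rw [he0, ← Function.comp_apply (f := e), hev, hwS.2 i hi]
  · rw [← des_comp_of_strictMonoOn he hv, hev, hwD]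

lemma ncard_desSeqs_comp (he : StrictMonoOn e (Set.Iic m)) (he0 : e 0 = 0)
    (heT : e '' Set.Iic m = insert 0 ↑T) (hT : T ⊆ Icc 1 L) :
    {w ∈ DesSeqs ℓ J L | ∀ i ∈ Icc 1 ℓ, w i ∈ T}.ncard = (DesSeqs ℓ J m).ncard := by
  have himage : (e ∘ ·) '' DesSeqs ℓ J m = {w ∈ DesSeqs ℓ J L | ∀ i ∈ Icc 1 ℓ, w i ∈ T} :=
    Set.ext fun w ↦ ⟨fun ⟨v, hv, hvw⟩ ↦ hvw ▸ comp_mem_desSeqs he he0 heT hT hv,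
      exists_comp_eq_of_mem he he0 heT hT⟩
  rw [← himage]
  refine Set.InjOn.ncard_image fun v hv v' hv' hvv' ↦ funext fun i ↦ ?_
  exact he.injOn (mem_Iic_of_mem_desSeqs hv i) (mem_Iic_of_mem_desSeqs hv' i) (congrFun hvv' i)

end Relabel

lemma ncard_desSeqs_mapsTo {L ℓ : ℕ} {J : Set ℕ} {T : Finset ℕ} (hT : T ⊆ Icc 1 L) :
    {w ∈ DesSeqs ℓ J L | ∀ i ∈ Icc 1 ℓ, w i ∈ T}.ncard = (DesSeqs ℓ J #T).ncard := by
  have h0T : 0 ∉ T := fun h ↦ by simpa using hT h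
  have hf : {x | x ∈ insert 0 T}.Finite := (insert 0 T).finite_toSet
  have hIic : Set.Iio #hf.toFinset = Set.Iic #T := by
    rw [show hf.toFinset = insert 0 T from Finset.finite_toSet_toFinset _,
      card_insert_of_notMem h0T, Set.Iio_add_one_eq_Iic]
  -- `Nat.nth (· ∈ insert 0 T)` lists `0` and then the elements of `T` in increasing order.
  refine ncard_desSeqs_comp (e := Nat.nth (· ∈ insert 0 T)) ?_
    (Nat.nth_zero_of_zero (by simp)) ?_ hT
  · exact hIic ▸ Nat.nth_strictMonoOn hf
  · rw [← hIic, Nat.image_nth_Iio_card hf]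
    ext x
    simp

lemma even_sum_choose_mul_ncard_desSeqs {ℓ L : ℕ} (J : Set ℕ) (hℓL : ℓ < L) :
    Even (∑ n ∈ range (L + 1), L.choose n * (DesSeqs ℓ J n).ncard) := by
  classical
  set W := (desSeqs_finite ℓ J L).toFinset
  have hrelabel : ∀ T ∈ (Icc 1 L).powerset,
      (DesSeqs ℓ J #T).ncard = #{w ∈ W | (Icc 1 ℓ).image w ⊆ T} := by
    intro T hT
    rw [← ncard_desSeqs_mapsTo (mem_powerset.mp hT), ← Set.ncard_coe_finset]
    congr 1
    ext w
    simp [W, image_subset_iff]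
  have hsupersets : ∀ w ∈ W, #{T ∈ (Icc 1 L).powerset | (Icc 1 ℓ).image w ⊆ T} =
      2 ^ (L - #((Icc 1 ℓ).image w)) := by
    intro w hw
    have hsub : (Icc 1 ℓ).image w ⊆ Icc 1 L :=
      image_subset_iff.mpr ((Set.Finite.mem_toFinset _).mp hw).1.1
    have hIcc : {T ∈ (Icc 1 L).powerset | (Icc 1 ℓ).image w ⊆ T} =
        Finset.Icc ((Icc 1 ℓ).image w) (Icc 1 L) := by
      ext T
      simp [and_comm]
    rw [hIcc, card_Icc_finset hsub, Nat.card_Icc, Nat.add_sub_cancel]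
  have hdouble : ∑ n ∈ range (L + 1), L.choose n * (DesSeqs ℓ J n).ncard =
      ∑ w ∈ W, 2 ^ (L - #((Icc 1 ℓ).image w)) := calc
    _ = ∑ T ∈ (Icc 1 L).powerset, (DesSeqs ℓ J #T).ncard := by
      rw [sum_powerset_apply_card (fun n ↦ (DesSeqs ℓ J n).ncard), Nat.card_Icc,
        Nat.add_sub_cancel]
      rfl
    _ = ∑ T ∈ (Icc 1 L).powerset, #{w ∈ W | (Icc 1 ℓ).image w ⊆ T} := sum_congr rfl hrelabel
    _ = ∑ w ∈ W, #{T ∈ (Icc 1 L).powerset | (Icc 1 ℓ).image w ⊆ T} := by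
      simp only [card_filter]
      exact sum_comm
    _ = _ := sum_congr rfl hsupersets
  rw [hdouble]
  refine Finset.even_sum _ fun w _ ↦ (Nat.even_pow' ?_).mpr even_two
  have := (card_image_le (s := Icc 1 ℓ) (f := w)).trans_eq (Nat.card_Icc 1 ℓ)
  omega

lemma eq_one_of_desSeqs_of_lt {ℓ n r : ℕ} {J : Set ℕ} {v : ℕ → ℕ} (hv : v ∈ DesSeqs ℓ J n)
    (hJ : ∀ i ∈ J, i ≤ r) (hvℓ : v ℓ = 1) {i : ℕ} (hri : r < i) (hiℓ : i ≤ ℓ) : v i = 1 := by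
  revert hri
  induction hiℓ using Nat.decreasingInduction with
  | self => exact fun _ ↦ hvℓ
  | of_succ k hkℓ ih =>
    intro hrk
    have hk : k ∉ Des ℓ v := fun hk ↦ by have := hJ k (hv.2 ▸ hk); omega
    have hvk := mem_Icc.mp (hv.1.1 k (mem_Icc.mpr ⟨by omega, hkℓ.le⟩))
    have := ih (by omega)
    simp only [Des, Set.mem_ofPred_eq, not_and, not_lt] at hk
    have := hk (by omega) hkℓ
    omega

lemma des_eq_inter_Iio {r ℓ : ℕ} {v w : ℕ → ℕ} (hrℓ : r ≤ ℓ) (hvw : ∀ i ≤ r, w i = v i) :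
    Des r w = Des ℓ v ∩ Set.Iio r := by
  ext i
  simp only [Des, Set.mem_inter_iff, Set.mem_ofPred_eq, Set.mem_Iio]
  constructor
  · rintro ⟨h1, h2, h3⟩
    rw [hvw i (by omega), hvw (i + 1) (by omega)] at h3
    exact ⟨⟨h1, by omega, h3⟩, h2⟩
  · rintro ⟨⟨h1, -, h3⟩, h2⟩
    rw [← hvw i (by omega), ← hvw (i + 1) (by omega)] at h3
    exact ⟨h1, h2, h3⟩

def padOnes (r ℓ : ℕ) (w : ℕ → ℕ) (i : ℕ) : ℕ :=
  if i ≤ r then w i else if i ≤ ℓ then 1 else 0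

section padOnes

variable {r ℓ : ℕ} {w : ℕ → ℕ} {i : ℕ}

lemma padOnes_of_le (h : i ≤ r) : padOnes r ℓ w i = w i := if_pos h

lemma padOnes_of_lt_of_le (hri : r < i) (hiℓ : i ≤ ℓ) : padOnes r ℓ w i = 1 := by
  simp [padOnes, hiℓ, hri.not_ge]

lemma padOnes_of_lt (hrℓ : r ≤ ℓ) (hℓi : ℓ < i) : padOnes r ℓ w i = 0 := by
  simp [padOnes, show ¬i ≤ r by omega, show ¬i ≤ ℓ by omega]

end padOnes

section Truncation

variable {s : Finset ℕ} {ℓ n : ℕ}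

lemma padOnes_mem (hs : ∀ x ∈ s, 1 ≤ x) (hsℓ : s.sup id < ℓ) (hn : 1 ≤ n) {w : ℕ → ℕ}
    (hw : w ∈ {w ∈ Seqs (s.sup id) n |
      Des (s.sup id) w = ↑(s.erase (s.sup id)) ∧ w (s.sup id) ≠ 1}) :
    padOnes (s.sup id) ℓ w ∈ {v ∈ DesSeqs ℓ s n | v ℓ = 1} := by
  set r := s.sup id
  obtain ⟨hwS, hwD, hw1⟩ := hw
  refine ⟨⟨⟨fun i hi ↦ ?_, fun i hi ↦ ?_⟩, ?_⟩, padOnes_of_lt_of_le hsℓ le_rfl⟩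
  · obtain ⟨hi1, hiℓ⟩ := mem_Icc.mp hi
    by_cases hir : i ≤ r
    · rw [padOnes_of_le hir]
      exact hwS.1 i (mem_Icc.mpr ⟨hi1, hir⟩)
    · rw [padOnes_of_lt_of_le (by omega) hiℓ]
      exact mem_Icc.mpr ⟨le_rfl, hn⟩
  · rcases Nat.eq_zero_or_pos i with rfl | hi0
    · rw [padOnes_of_le (Nat.zero_le _)]
      exact hwS.2 0 (by simp)
    · exact padOnes_of_lt hsℓ.le (by simp at hi; omega)
  · ext i
    rw [mem_coe]
    rcases lt_trichotomy i r with hir | hir | hir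
    · have hDes := des_eq_inter_Iio (v := padOnes r ℓ w) hsℓ.le fun j hj ↦ (padOnes_of_le hj).symm
      have hiff : i ∈ Des r w ↔ i ∈ Des ℓ (padOnes r ℓ w) := by simp [hDes, hir]
      rw [← hiff, hwD, coe_erase, Set.mem_sdiff, mem_coe]
      simp [hir.ne]
    · subst hir
      simp only [Des, Set.mem_ofPred_eq, padOnes_of_le le_rfl,
        padOnes_of_lt_of_le (Nat.lt_succ_self _) hsℓ]
      constructor
      · exact fun h ↦ sup_id_mem_of_pos h.1
      · intro hrs
        have hwr := mem_Icc.mp (hwS.1 _ (mem_Icc.mpr ⟨hs _ hrs, le_rfl⟩))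
        exact ⟨hs _ hrs, hsℓ, by omega⟩
    · simp only [Des, Set.mem_ofPred_eq]
      constructor
      · rintro ⟨-, hiℓ, hlt⟩
        rw [padOnes_of_lt_of_le hir hiℓ.le, padOnes_of_lt_of_le (by omega) hiℓ] at hlt
        exact absurd hlt (lt_irrefl 1)
      · intro his
        have : i ≤ r := le_sup (f := id) his
        omega

lemma exists_padOnes_eq (hsℓ : s.sup id < ℓ) {v : ℕ → ℕ}
    (hv : v ∈ {v ∈ DesSeqs ℓ s n | v ℓ = 1}) :
    ∃ w ∈ {w ∈ Seqs (s.sup id) n | Des (s.sup id) w = ↑(s.erase (s.sup id)) ∧ w (s.sup id) ≠ 1},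
      padOnes (s.sup id) ℓ w = v := by
  set r := s.sup id
  obtain ⟨⟨hvS, hvD⟩, hv1⟩ := hv
  have hs_le : ∀ x ∈ (s : Set ℕ), x ≤ r := fun x hx ↦ le_sup (f := id) hx
  refine ⟨fun i ↦ if i ≤ r then v i else 0, ⟨⟨fun i hi ↦ ?_, fun i hi ↦ ?_⟩, ?_, ?_⟩, ?_⟩
  · obtain ⟨hi1, hir⟩ := mem_Icc.mp hi
    simpa [hir] using hvS.1 i (mem_Icc.mpr ⟨hi1, by omega⟩)
  · rcases Nat.eq_zero_or_pos i with rfl | hi0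
    · simpa using hvS.2 0 (by simp)
    · simp only [mem_Icc, not_and, not_le] at hi
      simp [(hi hi0).not_ge]
  · rw [des_eq_inter_Iio hsℓ.le fun j hj ↦ if_pos hj, hvD]
    ext i
    simp only [Set.mem_inter_iff, mem_coe, Set.mem_Iio, coe_erase, Set.mem_sdiff,
      Set.mem_singleton_iff]
    constructor
    · exact fun h ↦ ⟨h.1, h.2.ne⟩
    · exact fun h ↦ ⟨h.1, lt_of_le_of_ne (hs_le i h.1) h.2⟩
  · show (if r ≤ r then v r else 0) ≠ 1
    rw [if_pos le_rfl]
    rcases Nat.eq_zero_or_pos r with hr0 | hr0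
    · have hv0 : v 0 = 0 := hvS.2 0 (by simp)
      rw [hr0, hv0]
      exact zero_ne_one
    · have hdesc : v (r + 1) < v r := (hvD ▸ mem_coe.mpr (sup_id_mem_of_pos hr0) : r ∈ Des ℓ v).2.2
      have hone : v (r + 1) = 1 :=
        eq_one_of_desSeqs_of_lt ⟨hvS, hvD⟩ hs_le hv1 (Nat.lt_succ_self r) hsℓ
      omega
  · funext i
    by_cases hir : i ≤ r
    · exact (padOnes_of_le hir).trans (if_pos hir)
    · by_cases hiℓ : i ≤ ℓ
      · exact (padOnes_of_lt_of_le (by omega) hiℓ).trans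
          (eq_one_of_desSeqs_of_lt ⟨hvS, hvD⟩ hs_le hv1 (by omega) hiℓ).symm
      · exact (padOnes_of_lt hsℓ.le (by omega)).trans (hvS.2 i (by simp; omega)).symm

lemma ncard_desSeqs_last_eq_one (hs : ∀ x ∈ s, 1 ≤ x) (hsℓ : s.sup id < ℓ) (hn : 1 ≤ n) :
    {v ∈ DesSeqs ℓ s n | v ℓ = 1}.ncard = Ncount s n := by
  have himage : padOnes (s.sup id) ℓ ''
      {w ∈ Seqs (s.sup id) n | Des (s.sup id) w = ↑(s.erase (s.sup id)) ∧ w (s.sup id) ≠ 1} =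
      {v ∈ DesSeqs ℓ s n | v ℓ = 1} := by
    ext v
    exact ⟨fun ⟨w, hw, hwv⟩ ↦ hwv ▸ padOnes_mem hs hsℓ hn hw, exists_padOnes_eq hsℓ⟩
  rw [Ncount, ← himage]
  refine Set.InjOn.ncard_image fun w hw w' hw' hww' ↦ funext fun i ↦ ?_
  by_cases hi : i ≤ s.sup id
  · simpa [padOnes_of_le hi] using congrFun hww' i
  · rw [hw.1.2 i (by simp; omega), hw'.1.2 i (by simp; omega)]

end Truncation

lemma ncard_desSeqs_eq_ncount_insert_add {a n : ℕ} {s : Finset ℕ} (hs : ∀ x ∈ s, 1 ≤ x)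
    (hsa : ∀ x ∈ s, x < a) (ha : 1 ≤ a) (hn : 1 ≤ n) :
    (DesSeqs a s n).ncard = Ncount (insert a s) n + Ncount s n := by
  have herase : (insert a s).erase a = s := erase_insert fun h ↦ lt_irrefl a (hsa a h)
  have hsℓ : s.sup id < a := (Finset.sup_lt_iff (by simp; omega)).mpr hsa
  have hNcount : Ncount (insert a s) n = {v ∈ DesSeqs a s n | v a ≠ 1}.ncard := by
    rw [Ncount, sup_id_insert_of_forall_lt hsa, herase]
    congr 1
    ext v
    simp [DesSeqs, and_assoc]
  rw [hNcount, ← ncard_desSeqs_last_eq_one hs hsℓ hn, add_comm]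
  exact (Set.ncard_inter_add_ncard_sdiff_eq_ncard _ {v | v a = 1} (desSeqs_finite _ _ _)).symm

theorem odd_sum_choose_mul_ncount {I : Finset ℕ} (hI : ∀ x ∈ I, 1 ≤ x) {L : ℕ}
    (hL : I.sup id < L) : Odd (∑ n ∈ Icc 1 L, L.choose n * Ncount I n) := by
  induction I using Finset.induction_on_max with
  | empty =>
    have hsum := Nat.sum_range_choose L
    rw [sum_range_succ_eq_add_sum_Icc, Nat.choose_zero_right] at hsum
    have hL0 : L ≠ 0 := by simpa [Nat.pos_iff_ne_zero] using hL
    obtain ⟨k, hk⟩ := (Nat.even_pow' (m := 2) hL0).mpr even_two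
    simp only [ncount_empty, mul_one]
    exact ⟨k - 1, by omega⟩
  | insert a s hsa ih =>
    have ha : 1 ≤ a := hI a (mem_insert_self a s)
    have hs : ∀ x ∈ s, 1 ≤ x := fun x hx ↦ hI x (mem_insert_of_mem hx)
    rw [sup_id_insert_of_forall_lt hsa] at hL
    have hodd := ih hs ((Finset.sup_le fun x hx ↦ (hsa x hx).le).trans_lt hL)
    have hempty : DesSeqs a s 0 = ∅ := Set.eq_empty_of_forall_notMem fun v hv ↦ by
      have := mem_Icc.mp (hv.1.1 a (mem_Icc.mpr ⟨ha, le_rfl⟩))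
      omega
    have hsplit : ∑ n ∈ Icc 1 L, L.choose n * (DesSeqs a s n).ncard =
        ∑ n ∈ Icc 1 L, L.choose n * Ncount (insert a s) n +
          ∑ n ∈ Icc 1 L, L.choose n * Ncount s n := by
      rw [← sum_add_distrib]
      refine sum_congr rfl fun n hn ↦ ?_
      rw [ncard_desSeqs_eq_ncount_insert_add hs hsa ha (mem_Icc.mp hn).1, mul_add]
    have heven := even_sum_choose_mul_ncard_desSeqs (s : Set ℕ) hL
    rw [sum_range_succ_eq_add_sum_Icc, hempty, Set.ncard_empty, mul_zero, zero_add, hsplit,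
      Nat.even_add] at heven
    exact Nat.not_even_iff_odd.mp fun h ↦ Nat.not_even_iff_odd.mpr hodd (heven.mp h)

/-- if `k ≥ 0` and `a_0,…,a_{α_t}` are the coefficients of `N(I,n)` in the
basis `(C(n+k, i))_i` of generalized binomial coefficients, then some `a_i` is negative. -/
theorem stmt_17 (I : Finset ℕ) (hI : I.Nonempty) (hIpos : ∀ x ∈ I, 1 ≤ x)
    (k : ℤ) (hk : 0 ≤ k) (a : ℕ → ℚ)
    (ha : ∀ n : ℕ, 1 ≤ n →
      (Ncount I n : ℚ) =
        ∑ i ∈ Finset.range (I.sup id + 1), a i * genChoose ((n : ℤ) + k) i) :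
    ∃ i, i ≤ I.sup id ∧ a i < 0 := by
  by_contra! hnonneg
  set D := I.sup id
  obtain ⟨x, hx⟩ := hI
  have hD : 1 ≤ D := (hIpos x hx).trans (le_sup (f := id) hx)
  lift k to ℕ using hk
  set P : ℕ → ℚ := fun n ↦ ∑ i ∈ range (D + 1), a i * ((n + k).choose i : ℚ)
  have hPN : ∀ n, 1 ≤ n → P n = Ncount I n := fun n hn ↦ by
    rw [ha n hn]
    simp only [P, ← Nat.cast_add, genChoose_natCast]
  have hcoeff : ∀ i ∈ range (D + 1), 0 ≤ a i := fun i hi ↦ hnonneg i (by simp at hi; omega)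
  have hP0 : P 0 = 0 := by
    refine le_antisymm ?_ (sum_nonneg fun i hi ↦ mul_nonneg (hcoeff i hi) (Nat.cast_nonneg _))
    calc P 0 ≤ P 1 := sum_le_sum fun i hi ↦ mul_le_mul_of_nonneg_left
            (by exact_mod_cast Nat.choose_le_choose i (by omega)) (hcoeff i hi)
      _ = 0 := by rw [hPN 1 le_rfl, ncount_eq_zero_of_le_one hD le_rfl, Nat.cast_zero]
  have hP : P = fun n ↦ (Ncount I n : ℚ) := by
    funext n
    rcases n.eq_zero_or_pos with rfl | hn
    · rw [hP0, ncount_eq_zero_of_le_one hD (Nat.zero_le 1), Nat.cast_zero]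
    · exact hPN n hn
  have heven := even_sum_choose_mul_of_fwdDiff_iter_eq_zero (L := D + 1) (f := Ncount I)
    (by rw [← hP, fwdDiff_iter_sum_mul_choose_eq_zero]; rfl)
  rw [sum_range_succ_eq_add_sum_Icc, ncount_eq_zero_of_le_one hD (Nat.zero_le 1), mul_zero,
    zero_add] at heven
  exact Nat.not_even_iff_odd.mpr (odd_sum_choose_mul_ncount hIpos (Nat.lt_succ_self D)) heven
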